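/- arXiv:2407.18315 — 2 statements merged into one kernel-verified Lean document; each statement's English description precedes it below -/
import Mathlib

section
/- Let 1 ≤ p < ∞, let (X,d,μ) satisfy the standing assumptions, let ρ : X → [0,∞] be a Borel function with ∫_X ρ^p dμ < ∞, let k ∈ [0,∞), and let A ⊆ X be a nonempty closed set. Define u(x) := min{ k, inf{ ∫₀^L ρ(γ(t)) dt : L ≥ 0, γ : [0,L] → X is 1-Lipschitz, γ(0) ∈ A, γ(L) = x } } and v(x) := inf{ ∫₀^L ρ(γ(t)) dt : L ≥ 0, γ : [0,L] → X is 1-Lipschitz, γ(0) ∈ A, γ(L) = x } ∈ [0,∞] (with inf ∅ = ∞). Then u and v are measurable with respect to the completion of μ, and ρ is an upper gradient of u. Moreover, if there is a constant C ≥ 0 with ρ ≤ C on X, and for every x ∈ X there exists a 1-Lipschitz curve γ : [0,L] → X with γ(0) ∈ A and γ(L) = x, then v is finite everywhere and ρ is an upper gradient of v. -/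
/-!
The sublevel sets `{v < c}` are analytic: after extending curves constantly outside `[0, L]`,
`{v < c}` is the image of a Borel subset of the Polish space `ℝ × C(ℝ, X)` under the continuous
endpoint map `(L, γ) ↦ γ L`. Analytic sets are measurable for the completion of every σ-finite
Borel measure, by Choquet's capacitability argument: if `f : (ℕ → ℕ) → X` is continuous and
`μ (range f) > a`, choosing bounds `m 0, m 1, …` one coordinate at a time yields a compact set
`f '' ∏ i, [0, m i] ⊆ range f` of measure at least `a`.

Concatenating curves from `A` to `γ 0` with `γ` gives `v (γ L) ≤ v (γ 0) + ∫_γ ρ`, and running `γ`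
backwards gives the opposite inequality; both survive truncation at `k`, so `ρ` is an upper
gradient of `u`, and of `v` wherever `v` is finite.
-/

open MeasureTheory Metric Set Filter
open scoped ENNReal NNReal Topology

/-- `g` is an upper gradient of `u`: for every `L ≥ 0` and every `1`-Lipschitz curve
`γ : [0,L] → X`, one has `|u(γ L) - u(γ 0)| ≤ ∫₀^L g(γ t) dt`. -/
def IsUpperGradient {X : Type*} [MetricSpace X] (g : X → ℝ≥0∞) (u : X → ℝ) : Prop :=
  ∀ (L : ℝ) (γ : ℝ → X), 0 ≤ L → LipschitzOnWith 1 γ (Set.Icc 0 L) →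
    ENNReal.ofReal |u (γ L) - u (γ 0)| ≤ ∫⁻ t in Set.Icc 0 L, g (γ t)

/-- The infimum `inf { ∫₀^L ρ(γ(t)) dt }` over all `1`-Lipschitz curves `γ : [0,L] → X` from
the set `A` to the point `x` (with `inf ∅ = ∞`). -/
noncomputable def curveInf {X : Type*} [MetricSpace X] (ρ : X → ℝ≥0∞) (A : Set X)
    (x : X) : ℝ≥0∞ :=
  ⨅ (L : ℝ) (γ : ℝ → X) (_ : 0 ≤ L) (_ : LipschitzOnWith 1 γ (Set.Icc 0 L))
    (_ : γ 0 ∈ A) (_ : γ L = x), ∫⁻ t in Set.Icc 0 L, ρ (γ t)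

def cylinderLE (n : ℕ) (m : ℕ → ℕ) : Set (ℕ → ℕ) := {σ | ∀ i < n, σ i ≤ m i}

lemma cylinderLE_zero (m : ℕ → ℕ) : cylinderLE 0 m = univ := by
  simp [cylinderLE]

lemma cylinderLE_congr {n : ℕ} {m m' : ℕ → ℕ} (h : ∀ i < n, m i = m' i) :
    cylinderLE n m = cylinderLE n m' := by
  ext σ
  exact forall₂_congr fun i hi => by rw [h i hi]

lemma cylinderLE_succ_update (n : ℕ) (m : ℕ → ℕ) (j : ℕ) :
    cylinderLE (n + 1) (Function.update m n j) = cylinderLE n m ∩ {σ | σ n ≤ j} := by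
  ext σ
  simp only [cylinderLE, mem_inter_iff, mem_ofPred_eq, Nat.forall_lt_succ_right,
    Function.update_self]
  refine and_congr_left' (forall₂_congr fun i hi => ?_)
  rw [Function.update_of_ne hi.ne]

lemma exists_forall_lt_measure_image_cylinderLE {X : Type*} [MeasurableSpace X]
    (μ : Measure X) (f : (ℕ → ℕ) → X) {a : ℝ≥0∞} (ha : a < μ (range f)) :
    ∃ m : ℕ → ℕ, ∀ n, a < μ (f '' cylinderLE n m) := by
  have step : ∀ n m, a < μ (f '' cylinderLE n m) →
      ∃ j, a < μ (f '' cylinderLE (n + 1) (Function.update m n j)) := by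
    intro n m h
    have hmono : Monotone fun j => f '' cylinderLE (n + 1) (Function.update m n j) :=
      fun j j' hj => image_mono <| by
        simp only [cylinderLE_succ_update]
        exact inter_subset_inter_right _ fun σ hσ => le_trans hσ hj
    have hunion : ⋃ j, f '' cylinderLE (n + 1) (Function.update m n j) = f '' cylinderLE n m := by
      simp only [cylinderLE_succ_update, ← image_iUnion, ← inter_iUnion]
      congr 1
      exact inter_eq_left.2 fun σ _ => mem_iUnion.2 ⟨σ n, le_refl (σ n)⟩
    rw [← hunion, hmono.measure_iUnion] at h
    exact lt_iSup_iff.1 h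
  choose! J hJ using step
  let g : ℕ → ℕ → ℕ := fun n => Nat.rec 0 (fun k g => Function.update g k (J k g)) n
  have hg : ∀ n, a < μ (f '' cylinderLE n (g n)) := by
    intro n
    induction n with
    | zero => simpa [cylinderLE_zero] using ha
    | succ n ih => exact hJ n (g n) ih
  have hg_stable : ∀ n, ∀ i < n, g (i + 1) i = g n i := by
    intro n
    induction n with
    | zero => intro i hi; omega
    | succ n ih =>
      intro i hi
      rcases Nat.lt_succ_iff_lt_or_eq.1 hi with hi | rfl
      · rw [ih i hi]
        exact (Function.update_of_ne hi.ne _ _).symm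
      · rfl
  exact ⟨fun i => g (i + 1) i, fun n => by rw [cylinderLE_congr (hg_stable n)]; exact hg n⟩

lemma isCompact_pi_Iic (m : ℕ → ℕ) : IsCompact (univ.pi fun i => Iic (m i)) :=
  isCompact_univ_pi fun i => (finite_Iic (m i)).isCompact

lemma exists_image_cylinderLE_subset {X : Type*} [TopologicalSpace X]
    {f : (ℕ → ℕ) → X} (hf : Continuous f) (m : ℕ → ℕ) {U : Set X} (hU : IsOpen U)
    (hKU : f '' univ.pi (fun i => Iic (m i)) ⊆ U) :
    ∃ n, f '' cylinderLE n m ⊆ U := by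
  by_contra! h
  have : ∀ n, ∃ σ ∈ cylinderLE n m, f σ ∉ U := fun n => by
    simpa [not_subset] using h n
  choose σ hσ hσU using this
  obtain ⟨τ, hτ, φ, hφ, hψτ⟩ := (isCompact_pi_Iic m).tendsto_subseq (x := fun n => σ n ⊓ m)
    fun n i _ => (inf_le_right : σ n i ⊓ m i ≤ m i)
  -- `σ (φ j)` and its truncation by `m` agree at `i` as soon as `φ j > i`
  have hστ : Tendsto (fun j => σ (φ j)) atTop (𝓝 τ) := by
    refine tendsto_pi_nhds.2 fun i => (tendsto_pi_nhds.1 hψτ i).congr' ?_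
    filter_upwards [eventually_gt_atTop i] with j hj
    exact inf_eq_left.2 (hσ (φ j) i (hj.trans_le hφ.le_apply))
  obtain ⟨j, hj⟩ := ((hf.tendsto τ).comp hστ |>.eventually (hU.mem_nhds (hKU ⟨τ, hτ, rfl⟩))).exists
  exact hσU (φ j) hj

theorem exists_isCompact_subset_range_le_measure {X : Type*} [TopologicalSpace X]
    [MeasurableSpace X] (μ : Measure X) [μ.OuterRegular] {f : (ℕ → ℕ) → X} (hf : Continuous f)
    {a : ℝ≥0∞} (ha : a < μ (range f)) :
    ∃ K, IsCompact K ∧ K ⊆ range f ∧ a ≤ μ K := by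
  obtain ⟨m, hm⟩ := exists_forall_lt_measure_image_cylinderLE μ f ha
  refine ⟨f '' univ.pi (fun i => Iic (m i)),
    (isCompact_pi_Iic m).image hf, image_subset_range _ _, ?_⟩
  by_contra! hK
  obtain ⟨U, hKU, hU, hμU⟩ := Set.exists_isOpen_lt_of_lt _ _ hK
  obtain ⟨n, hn⟩ := exists_image_cylinderLE_subset hf m hU hKU
  exact (hm n).not_ge ((measure_mono hn).trans hμU.le)

theorem nullMeasurableSet_of_forall_lt_exists_subset {X : Type*} [MeasurableSpace X]
    {μ : Measure X} {s : Set X} (hs : μ s ≠ ∞)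
    (h : ∀ a < μ s, ∃ t ⊆ s, MeasurableSet t ∧ a ≤ μ t) : NullMeasurableSet s μ := by
  rcases eq_zero_or_pos (μ s) with h0 | hpos
  · exact NullMeasurableSet.of_null h0
  obtain ⟨a, -, ha, ha_lim⟩ := exists_seq_strictMono_tendsto' hpos
  choose t hts ht hat using fun n => h (a n) (ha n).2
  have hle : μ s ≤ μ (⋃ n, t n) :=
    le_of_tendsto' ha_lim fun n => (hat n).trans (measure_mono (subset_iUnion t n))
  exact (MeasurableSet.iUnion ht).nullMeasurableSet.congr
    (ae_eq_of_subset_of_measure_ge (iUnion_subset hts) hle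
      (MeasurableSet.iUnion ht).nullMeasurableSet hs)

theorem MeasureTheory.AnalyticSet.nullMeasurableSet {X : Type*} [TopologicalSpace X]
    [TopologicalSpace.MetrizableSpace X] [MeasurableSpace X] [BorelSpace X] {s : Set X}
    (hs : AnalyticSet s) (μ : Measure X) [SigmaFinite μ] : NullMeasurableSet s μ := by
  have hfin : ∀ ν : Measure X, IsFiniteMeasure ν → NullMeasurableSet s ν := by
    intro ν _
    rw [AnalyticSet] at hs
    rcases hs with rfl | ⟨f, hf, rfl⟩
    · exact nullMeasurableSet_empty
    refine nullMeasurableSet_of_forall_lt_exists_subset (measure_ne_top ν _) fun a ha => ?_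
    obtain ⟨K, hK, hKs, haK⟩ := exists_isCompact_subset_range_le_measure ν hf ha
    exact ⟨K, hKs, hK.measurableSet, haK⟩
  have hpiece : ∀ n, NullMeasurableSet (s ∩ spanningSets μ n) μ := fun n => by
    have := isFiniteMeasure_restrict.2 (measure_spanningSets_lt_top μ n).ne
    rw [← nullMeasurableSet_restrict (measurableSet_spanningSets μ n).nullMeasurableSet]
    exact hfin _ this
  simpa only [← inter_iUnion, iUnion_spanningSets, inter_univ] using NullMeasurableSet.iUnion hpiece

lemma ENNReal.ofReal_abs_toReal_sub_le {a b c : ℝ≥0∞} (ha : a ≠ ∞) (hb : b ≠ ∞)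
    (hab : a ≤ b + c) (hba : b ≤ a + c) : ENNReal.ofReal |a.toReal - b.toReal| ≤ c := by
  wlog h : b ≤ a generalizing a b
  · rw [abs_sub_comm]
    exact this hb ha hba hab (le_of_not_ge h)
  rw [abs_of_nonneg (sub_nonneg.2 (ENNReal.toReal_mono ha h)), ← ENNReal.toReal_sub_of_le h ha,
    ENNReal.ofReal_toReal (ENNReal.sub_ne_top ha)]
  exact tsub_le_iff_left.2 hab

lemma LipschitzOnWith.congr {α β : Type*} [PseudoEMetricSpace α] [PseudoEMetricSpace β]
    {f g : α → β} {K : ℝ≥0} {s : Set α} (hf : LipschitzOnWith K f s)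
    (h : EqOn f g s) : LipschitzOnWith K g s := fun x hx y hy => by
  rw [← h hx, ← h hy]
  exact hf hx hy

lemma LipschitzOnWith.Icc_union_Icc {Y : Type*} [PseudoMetricSpace Y] {f : ℝ → Y} {K : ℝ≥0}
    {a b c : ℝ} (hab : LipschitzOnWith K f (Icc a b)) (hbc : LipschitzOnWith K f (Icc b c)) :
    LipschitzOnWith K f (Icc a c) := by
  have key : ∀ s ∈ Icc a c, ∀ t ∈ Icc a c, s ≤ t → dist (f s) (f t) ≤ K * dist s t := by
    intro s hs t ht hst
    rcases le_total t b with htb | hbt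
    · exact hab.dist_le_mul s ⟨hs.1, hst.trans htb⟩ t ⟨ht.1, htb⟩
    rcases le_total b s with hbs | hsb
    · exact hbc.dist_le_mul s ⟨hbs, hs.2⟩ t ⟨hbt, ht.2⟩
    calc dist (f s) (f t) ≤ dist (f s) (f b) + dist (f b) (f t) := dist_triangle _ _ _
      _ ≤ K * dist s b + K * dist b t := add_le_add
          (hab.dist_le_mul s ⟨hs.1, hsb⟩ b ⟨hs.1.trans hsb, le_rfl⟩)
          (hbc.dist_le_mul b ⟨le_rfl, hbt.trans ht.2⟩ t ⟨hbt, ht.2⟩)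
      _ = K * dist s t := by
          rw [Real.dist_eq, Real.dist_eq, Real.dist_eq, abs_of_nonpos (by linarith),
            abs_of_nonpos (by linarith), abs_of_nonpos (by linarith)]
          ring
  refine LipschitzOnWith.of_dist_le_mul fun s hs t ht => ?_
  rcases le_total s t with hst | hts
  · exact key s hs t ht hst
  · rw [dist_comm, dist_comm s]
    exact key t ht s hs hts

lemma lintegral_Icc_add (g : ℝ → ℝ≥0∞) {a b : ℝ} (ha : 0 ≤ a) (hb : 0 ≤ b) :
    ∫⁻ t in Icc 0 (a + b), g t = (∫⁻ t in Icc 0 a, g t) + ∫⁻ t in Icc 0 b, g (t + a) := by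
  have hshift : ∫⁻ t in Ioc a (a + b), g t = ∫⁻ t in Ioc 0 b, g (t + a) := by
    rw [← (measurePreserving_add_right volume a).setLIntegral_comp_preimage_emb
      (measurableEmbedding_addRight a), preimage_add_const_Ioc, sub_self, add_sub_cancel_left]
  rw [← Icc_union_Ioc_eq_Icc ha (le_add_of_nonneg_right hb),
    lintegral_union measurableSet_Ioc (disjoint_left.2 fun t h₁ h₂ => h₂.1.not_ge h₁.2), hshift,
    setLIntegral_congr Ioc_ae_eq_Icc]

lemma lintegral_Icc_comp_sub_left (g : ℝ → ℝ≥0∞) (L : ℝ) :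
    ∫⁻ t in Icc 0 L, g (L - t) = ∫⁻ t in Icc 0 L, g t := by
  conv_rhs => rw [← (volume.measurePreserving_sub_left L).setLIntegral_comp_preimage_emb
    (measurableEmbedding_subLeft L)]
  rw [preimage_const_sub_Icc, sub_zero, sub_self]

section CurveInf

variable {X : Type*} [MetricSpace X] {ρ : X → ℝ≥0∞} {A : Set X}

lemma curveInf_le {L : ℝ} {γ : ℝ → X} (hL : 0 ≤ L) (hγ : LipschitzOnWith 1 γ (Icc 0 L))
    (h₀ : γ 0 ∈ A) : curveInf ρ A (γ L) ≤ ∫⁻ t in Icc 0 L, ρ (γ t) :=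
  iInf_le_of_le L <| iInf_le_of_le γ <| iInf_le_of_le hL <| iInf_le_of_le hγ <|
    iInf_le_of_le h₀ <| iInf_le _ rfl

lemma curveInf_lt_iff {x : X} {c : ℝ≥0∞} :
    curveInf ρ A x < c ↔ ∃ (L : ℝ) (γ : ℝ → X), 0 ≤ L ∧ LipschitzOnWith 1 γ (Icc 0 L) ∧
      γ 0 ∈ A ∧ γ L = x ∧ ∫⁻ t in Icc 0 L, ρ (γ t) < c := by
  simp only [curveInf, iInf_lt_iff, exists_prop]

lemma curveInf_lt_iff_exists_lipschitzWith {x : X} {c : ℝ≥0∞} :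
    curveInf ρ A x < c ↔ ∃ (L : ℝ) (γ : ℝ → X), 0 ≤ L ∧ LipschitzWith 1 γ ∧
      γ 0 ∈ A ∧ γ L = x ∧ ∫⁻ t in Icc 0 L, ρ (γ t) < c := by
  constructor
  · rw [curveInf_lt_iff]
    rintro ⟨L, γ, hL, hγ, h₀, rfl, hlt⟩
    have hext : EqOn (fun t => γ (projIcc 0 L hL t)) γ (Icc 0 L) := fun t ht => by
      simp only [projIcc_of_mem hL ht]
    refine ⟨L, fun t => γ (projIcc 0 L hL t), hL, ?_, ?_, ?_, ?_⟩
    · have := (lipschitzOnWith_iff_restrict.1 hγ).comp (LipschitzWith.projIcc hL)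
      rwa [mul_one] at this
    · rwa [hext ⟨le_rfl, hL⟩]
    · exact hext ⟨hL, le_rfl⟩
    · rwa [setLIntegral_congr_fun measurableSet_Icc fun t ht => congrArg ρ (hext ht)]
  · rintro ⟨L, γ, hL, hγ, h₀, rfl, hlt⟩
    exact (curveInf_le hL hγ.lipschitzOnWith h₀).trans_lt hlt

lemma curveInf_le_add_lintegral {L : ℝ} {γ : ℝ → X} (hL : 0 ≤ L)
    (hγ : LipschitzOnWith 1 γ (Icc 0 L)) :
    curveInf ρ A (γ L) ≤ curveInf ρ A (γ 0) + ∫⁻ t in Icc 0 L, ρ (γ t) := by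
  conv_rhs => rw [curveInf]
  simp only [ENNReal.iInf_add, le_iInf_iff]
  intro L₁ γ₁ hL₁ hγ₁ h₀ h₁
  let γ₂ : ℝ → X := fun t => if t ≤ L₁ then γ₁ t else γ (t - L₁)
  have hγ₂₁ : EqOn γ₂ γ₁ (Icc 0 L₁) := fun t ht => if_pos ht.2
  have hγ₂ : EqOn γ₂ (fun t => γ (t - L₁)) (Icc L₁ (L₁ + L)) := fun t ht => by
    rcases ht.1.eq_or_lt with rfl | h
    · simp [γ₂, h₁]
    · simp [γ₂, h.not_ge]
  have hshift : LipschitzOnWith 1 (fun t => γ (t - L₁)) (Icc L₁ (L₁ + L)) := by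
    have := hγ.comp (IsometryEquiv.subRight L₁).isometry.lipschitz.lipschitzOnWith
      fun t (ht : t ∈ Icc L₁ (L₁ + L)) => ⟨sub_nonneg.2 ht.1, by simpa [add_comm] using ht.2⟩
    rwa [mul_one] at this
  have hγ₂lip : LipschitzOnWith 1 γ₂ (Icc 0 (L₁ + L)) :=
    (hγ₁.congr hγ₂₁.symm).Icc_union_Icc (hshift.congr hγ₂.symm)
  calc curveInf ρ A (γ L) = curveInf ρ A (γ₂ (L₁ + L)) := by
        rw [hγ₂ ⟨le_add_of_nonneg_right hL, le_rfl⟩]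
        simp only [add_sub_cancel_left]
    _ ≤ ∫⁻ t in Icc 0 (L₁ + L), ρ (γ₂ t) :=
        curveInf_le (add_nonneg hL₁ hL) hγ₂lip (by rwa [hγ₂₁ ⟨le_rfl, hL₁⟩])
    _ = (∫⁻ t in Icc 0 L₁, ρ (γ₁ t)) + ∫⁻ t in Icc 0 L, ρ (γ t) := by
        rw [lintegral_Icc_add _ hL₁ hL,
          setLIntegral_congr_fun measurableSet_Icc fun t ht => congrArg ρ (hγ₂₁ ht),
          setLIntegral_congr_fun measurableSet_Icc fun t ht => congrArg ρ <|
            (hγ₂ ⟨le_add_of_nonneg_left ht.1, by linarith [ht.2]⟩).trans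
            (congrArg γ (add_sub_cancel_right t L₁))]

lemma curveInf_lt_top {c : ℝ≥0∞} (hc : c ≠ ∞) (hρ : ∀ x, ρ x ≤ c) {L : ℝ} {γ : ℝ → X}
    (hL : 0 ≤ L) (hγ : LipschitzOnWith 1 γ (Icc 0 L)) (h₀ : γ 0 ∈ A) :
    curveInf ρ A (γ L) < ∞ := by
  refine (curveInf_le hL hγ h₀).trans_lt ((lintegral_mono fun t => hρ (γ t)).trans_lt ?_)
  rw [setLIntegral_const, Real.volume_Icc]
  exact ENNReal.mul_lt_top hc.lt_top ENNReal.ofReal_lt_top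

lemma measurable_lintegral_Icc_comp [SecondCountableTopology X] [MeasurableSpace X]
    [BorelSpace X] [MeasurableSpace C(ℝ, X)] [BorelSpace C(ℝ, X)] (hρ : Measurable ρ) :
    Measurable fun p : ℝ × C(ℝ, X) => ∫⁻ t in Icc 0 p.1, ρ (p.2 t) := by
  have hG : Measurable fun q : (ℝ × C(ℝ, X)) × ℝ =>
      {q : (ℝ × C(ℝ, X)) × ℝ | q.2 ∈ Icc 0 q.1.1}.indicator (fun q => ρ (q.1.2 q.2)) q := by
    refine Measurable.indicator ?_ ?_
    · exact hρ.comp (continuous_eval.comp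
        ((continuous_snd.comp continuous_fst).prodMk continuous_snd)).measurable
    · exact (measurableSet_le measurable_const measurable_snd).inter
        (measurableSet_le measurable_snd (measurable_fst.comp measurable_fst))
  simp_rw [← lintegral_indicator measurableSet_Icc]
  exact hG.lintegral_prod_right'

theorem analyticSet_setOf_curveInf_lt [SecondCountableTopology X] [CompleteSpace X]
    [MeasurableSpace X] [BorelSpace X] (hρ : Measurable ρ) (hA : MeasurableSet A) (c : ℝ≥0∞) :
    AnalyticSet {x | curveInf ρ A x < c} := by
  let _ : MeasurableSpace C(ℝ, X) := borel _
  have : BorelSpace C(ℝ, X) := ⟨rfl⟩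
  let B : Set (ℝ × C(ℝ, X)) :=
    {p | 0 ≤ p.1 ∧ LipschitzWith 1 p.2 ∧ p.2 0 ∈ A ∧ ∫⁻ t in Icc 0 p.1, ρ (p.2 t) < c}
  have hB : MeasurableSet B := by
    refine (measurableSet_le measurable_const measurable_fst).inter <|
      MeasurableSet.inter ?_ <| MeasurableSet.inter ?_ ?_
    · exact ((isClosed_setOfPred_lipschitzWith 1).preimage
        (continuous_coeFun.comp continuous_snd)).measurableSet
    · exact ((continuous_eval_const 0).comp continuous_snd).measurable hA
    · exact measurable_lintegral_Icc_comp hρ measurableSet_Iio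
  have hBimage : {x | curveInf ρ A x < c} = (fun p : ℝ × C(ℝ, X) => p.2 p.1) '' B := by
    ext x
    simp only [mem_ofPred_eq, mem_image, curveInf_lt_iff_exists_lipschitzWith]
    constructor
    · rintro ⟨L, γ, hL, hγ, h₀, rfl, hlt⟩
      exact ⟨(L, ⟨γ, hγ.continuous⟩), ⟨hL, hγ, h₀, hlt⟩, rfl⟩
    · rintro ⟨⟨L, γ⟩, ⟨hL, hγ, h₀, hlt⟩, rfl⟩
      exact ⟨L, γ, hL, hγ, h₀, rfl, hlt⟩
  rw [hBimage]
  exact hB.analyticSet.image_of_continuous (continuous_eval.comp continuous_swap)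

theorem nullMeasurable_curveInf [SecondCountableTopology X] [CompleteSpace X]
    [MeasurableSpace X] [BorelSpace X] (μ : Measure X) [SigmaFinite μ] (hρ : Measurable ρ)
    (hA : MeasurableSet A) : NullMeasurable (curveInf ρ A) μ :=
  measurable_of_Iio (δ := NullMeasurableSpace X μ)
    fun c => (analyticSet_setOf_curveInf_lt hρ hA c).nullMeasurableSet μ

theorem isUpperGradient_toReal {w : X → ℝ≥0∞} (hw : ∀ x, w x ≠ ∞)
    (h : ∀ (L : ℝ) (γ : ℝ → X), 0 ≤ L → LipschitzOnWith 1 γ (Icc 0 L) →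
      w (γ L) ≤ w (γ 0) + ∫⁻ t in Icc 0 L, ρ (γ t)) :
    IsUpperGradient ρ fun x => (w x).toReal := by
  intro L γ hL hγ
  have hrev : LipschitzOnWith 1 (fun t => γ (L - t)) (Icc 0 L) := by
    have := hγ.comp (IsometryEquiv.subLeft L).isometry.lipschitz.lipschitzOnWith
      fun t (ht : t ∈ Icc 0 L) => ⟨sub_nonneg.2 ht.2, sub_le_self L ht.1⟩
    rwa [mul_one] at this
  have hback := h L _ hL hrev
  rw [lintegral_Icc_comp_sub_left (fun t => ρ (γ t))] at hback
  simp only [sub_self, sub_zero] at hback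
  exact ENNReal.ofReal_abs_toReal_sub_le (hw _) (hw _) (h L γ hL hγ) hback

end CurveInf

theorem statement17_general {X : Type*} [MetricSpace X] [MeasurableSpace X] [BorelSpace X]
    [ProperSpace X]
    (μ : Measure X)
    (hball : ∀ (x : X) (r : ℝ), 0 < r → 0 < μ (ball x r) ∧ μ (ball x r) < ⊤)
    (ρ : X → ℝ≥0∞) (hρ : Measurable ρ)
    (k : ℝ)
    (A : Set X) (hAclosed : IsClosed A) :
    NullMeasurable (fun x : X => (min (ENNReal.ofReal k) (curveInf ρ A x)).toReal) μ ∧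
    NullMeasurable (curveInf ρ A) μ ∧
    IsUpperGradient ρ (fun x : X => (min (ENNReal.ofReal k) (curveInf ρ A x)).toReal) ∧
    ((∃ C : ℝ, 0 ≤ C ∧ ∀ x : X, ρ x ≤ ENNReal.ofReal C) →
      (∀ x : X, ∃ (L : ℝ) (γ : ℝ → X), 0 ≤ L ∧ LipschitzOnWith 1 γ (Set.Icc 0 L) ∧
        γ 0 ∈ A ∧ γ L = x) →
      (∀ x : X, curveInf ρ A x < ⊤) ∧
        IsUpperGradient ρ (fun x : X => (curveInf ρ A x).toReal)) := by
  -- with `X` second countable, this makes `μ` σ-finite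
  have : IsLocallyFiniteMeasure μ :=
    ⟨fun x => ⟨ball x 1, ball_mem_nhds x one_pos, (hball x 1 one_pos).2⟩⟩
  have hv : NullMeasurable (curveInf ρ A) μ := nullMeasurable_curveInf μ hρ hAclosed.measurableSet
  refine ⟨(measurable_const.min measurable_id).ennreal_toReal.comp_nullMeasurable hv, hv, ?_, ?_⟩
  · refine isUpperGradient_toReal (fun x => (min_le_left _ _).trans_lt ENNReal.ofReal_lt_top |>.ne)
      fun L γ hL hγ => ?_
    calc min (ENNReal.ofReal k) (curveInf ρ A (γ L))
        ≤ min (ENNReal.ofReal k) (curveInf ρ A (γ 0) + ∫⁻ t in Icc 0 L, ρ (γ t)) :=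
          min_le_min_left _ (curveInf_le_add_lintegral hL hγ)
      _ ≤ min (ENNReal.ofReal k + ∫⁻ t in Icc 0 L, ρ (γ t))
            (curveInf ρ A (γ 0) + ∫⁻ t in Icc 0 L, ρ (γ t)) :=
          min_le_min_right _ le_self_add
      _ = min (ENNReal.ofReal k) (curveInf ρ A (γ 0)) + ∫⁻ t in Icc 0 L, ρ (γ t) :=
          min_add_add_right _ _ _
  · rintro ⟨C, -, hC⟩ hreach
    have hfin : ∀ x, curveInf ρ A x < ⊤ := fun x => by
      obtain ⟨L, γ, hL, hγ, h₀, rfl⟩ := hreach x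
      exact curveInf_lt_top ENNReal.ofReal_ne_top hC hL hγ h₀
    exact ⟨hfin, isUpperGradient_toReal (fun x => (hfin x).ne)
      fun L γ hL hγ => curveInf_le_add_lintegral hL hγ⟩

/-- under the standing assumptions, for Borel `ρ : X → [0,∞]` with
`∫ ρᵖ dμ < ∞`, `k ∈ [0,∞)` and a nonempty closed `A ⊆ X`, the functions
`u = min{k, inf_γ ∫_γ ρ}` and `v = inf_γ ∫_γ ρ` are measurable with respect to the completion
of `μ`, and `ρ` is an upper gradient of `u`; moreover, if `ρ ≤ C` for some constant `C ≥ 0`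
and every point of `X` can be joined to `A` by a `1`-Lipschitz curve, then `v` is finite
everywhere and `ρ` is an upper gradient of `v`. -/
theorem statement17 {X : Type*} [MetricSpace X] [MeasurableSpace X] [BorelSpace X]
    [ProperSpace X] [ConnectedSpace X]
    (μ : Measure X) (hXinf : μ Set.univ = ⊤)
    (hball : ∀ (x : X) (r : ℝ), 0 < r → 0 < μ (ball x r) ∧ μ (ball x r) < ⊤)
    (p : ℝ) (hp : 1 ≤ p)
    (ρ : X → ℝ≥0∞) (hρ : Measurable ρ) (hρp : (∫⁻ x, ρ x ^ p ∂μ) < ⊤)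
    (k : ℝ) (hk : 0 ≤ k)
    (A : Set X) (hA : A.Nonempty) (hAclosed : IsClosed A) :
    NullMeasurable (fun x : X => (min (ENNReal.ofReal k) (curveInf ρ A x)).toReal) μ ∧
    NullMeasurable (curveInf ρ A) μ ∧
    IsUpperGradient ρ (fun x : X => (min (ENNReal.ofReal k) (curveInf ρ A x)).toReal) ∧
    ((∃ C : ℝ, 0 ≤ C ∧ ∀ x : X, ρ x ≤ ENNReal.ofReal C) →
      (∀ x : X, ∃ (L : ℝ) (γ : ℝ → X), 0 ≤ L ∧ LipschitzOnWith 1 γ (Set.Icc 0 L) ∧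
        γ 0 ∈ A ∧ γ L = x) →
      (∀ x : X, curveInf ρ A x < ⊤) ∧
        IsUpperGradient ρ (fun x : X => (curveInf ρ A x).toReal)) :=
  statement17_general μ hball ρ hρ k A hAclosed
end

section
/- Let p ∈ [1,∞) and κ > 0. Let f : (0,∞) → ℝ be locally absolutely continuous with lim_{t→0⁺} f(t) = 0 and lim_{t→∞} f(t) = 0; concretely, suppose there is a locally integrable function f' : (0,∞) → ℝ such that f(b) − f(a) = ∫_a^b f'(t) dt for all 0 < a ≤ b < ∞. Then ∫₀^∞ |f(t)|^p e^{κt} dt ≤ (p/κ)^p · ∫₀^∞ |f'(t)|^p e^{κt} dt. -/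
open MeasureTheory Set Filter
open scoped ENNReal Topology

/-!
Since `f → 0` at infinity, `|f t| ≤ ∫_t^∞ |f'|`. Hölder's inequality against the weight
`v s = e^{βs}`, `β = κ/p`, bounds `|f t|^p e^{κt}` by `β^{1-p} e^{βt} ∫_t^∞ |f'|^p v^{p-1}`;
integrating in `t` and exchanging the order of integration, the inner integral
`∫_0^s e^{βt} dt ≤ e^{βs}/β` produces the constant `β^{-p} = (p/κ)^p`. Only the two estimates
`∫_t^∞ v⁻¹ ≤ c v(t)⁻¹` and `∫_0^s v ≤ c v(s)` on the weight enter, with constant `c^p`.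
-/

theorem ENNReal.rpow_sub_one_mul {x : ℝ≥0∞} {p : ℝ} (hp : 1 ≤ p) : x ^ (p - 1) * x = x ^ p := by
  conv_rhs => rw [← sub_add_cancel p 1]
  rw [ENNReal.rpow_add_of_nonneg _ _ (sub_nonneg.2 hp) zero_le_one, ENNReal.rpow_one]

theorem ENNReal.lintegral_rpow_le_lintegral_mul_rpow_lintegral_inv {α : Type*}
    [MeasurableSpace α] {μ : Measure α} {p : ℝ} (hp : 1 ≤ p) {F v : α → ℝ≥0∞}
    (hF : AEMeasurable F μ) (hv : AEMeasurable v μ) (hv0 : ∀ x, v x ≠ 0) (hvtop : ∀ x, v x ≠ ∞) :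
    (∫⁻ x, F x ∂μ) ^ p ≤ (∫⁻ x, F x ^ p * v x ^ (p - 1) ∂μ) * (∫⁻ x, (v x)⁻¹ ∂μ) ^ (p - 1) := by
  rcases hp.eq_or_lt with rfl | hp
  · simp
  set q := p.conjExponent
  have hpq : p.HolderConjugate q := .conjExponent hp
  have hw0 : ∀ x, v x ^ q⁻¹ ≠ 0 := fun x =>
    (ENNReal.rpow_pos (pos_iff_ne_zero.2 (hv0 x)) (hvtop x)).ne'
  have hwtop : ∀ x, v x ^ q⁻¹ ≠ ∞ := fun x =>
    ENNReal.rpow_ne_top_of_nonneg hpq.symm.inv_nonneg (hvtop x)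
  have hsplit : ∀ x, F x = (F x * v x ^ q⁻¹) * (v x ^ q⁻¹)⁻¹ := fun x => by
    rw [mul_assoc, ENNReal.mul_inv_cancel (hw0 x) (hwtop x), mul_one]
  have hleft : ∀ x, (F x * v x ^ q⁻¹) ^ p = F x ^ p * v x ^ (p - 1) := fun x => by
    rw [ENNReal.mul_rpow_of_nonneg _ _ hpq.nonneg, ← ENNReal.rpow_mul, inv_mul_eq_div,
      hpq.div_conj_eq_sub_one]
  have hright : ∀ x, ((v x ^ q⁻¹)⁻¹) ^ q = (v x)⁻¹ := fun x => by
    rw [ENNReal.inv_rpow, ← ENNReal.rpow_mul, inv_mul_cancel₀ hpq.symm.ne_zero, ENNReal.rpow_one]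
  have holder := ENNReal.lintegral_mul_le_Lp_mul_Lq μ hpq
    (f := fun x => F x * v x ^ q⁻¹) (g := fun x => (v x ^ q⁻¹)⁻¹)
    (hF.mul (hv.pow_const q⁻¹)) (hv.pow_const q⁻¹).inv
  simp only [Pi.mul_apply, ← hsplit, hleft, hright] at holder
  calc (∫⁻ x, F x ∂μ) ^ p
      ≤ ((∫⁻ x, F x ^ p * v x ^ (p - 1) ∂μ) ^ (1 / p) * (∫⁻ x, (v x)⁻¹ ∂μ) ^ (1 / q)) ^ p :=
        ENNReal.rpow_le_rpow holder hpq.nonneg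
    _ = _ := by
      rw [ENNReal.mul_rpow_of_nonneg _ _ hpq.nonneg, ← ENNReal.rpow_mul, ← ENNReal.rpow_mul,
        one_div_mul_cancel hpq.ne_zero, ENNReal.rpow_one, one_div_mul_eq_div,
        hpq.div_conj_eq_sub_one]

theorem lintegral_Ioi_mul_lintegral_Ioi {H w : ℝ → ℝ≥0∞} (hH : Measurable H) (hw : Measurable w)
    (a : ℝ) :
    ∫⁻ t in Ioi a, w t * ∫⁻ s in Ioi t, H s = ∫⁻ s in Ioi a, H s * ∫⁻ t in Ioo a s, w t := by
  have hK : Measurable (Function.uncurry fun t s : ℝ => if t < s then H s * w t else 0) :=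
    Measurable.ite (measurableSet_lt measurable_fst measurable_snd)
      ((hH.comp measurable_snd).mul (hw.comp measurable_fst)) measurable_const
  have hsupp : (fun s => H s * ∫⁻ t in Ioo a s, w t).support ⊆ Ioi a := by
    intro s hs
    by_contra has
    simp [Ioo_eq_empty_of_le (not_lt.1 (mem_Ioi.not.1 has))] at hs
  calc ∫⁻ t in Ioi a, w t * ∫⁻ s in Ioi t, H s
      = ∫⁻ t in Ioi a, ∫⁻ s, if t < s then H s * w t else 0 := by
        refine lintegral_congr fun t => ?_
        rw [mul_comm, ← lintegral_mul_const _ hH, ← lintegral_indicator measurableSet_Ioi]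
        simp only [indicator_apply, mem_Ioi]
    _ = ∫⁻ s, ∫⁻ t in Ioi a, if t < s then H s * w t else 0 :=
        lintegral_lintegral_swap hK.aemeasurable
    _ = ∫⁻ s, H s * ∫⁻ t in Ioo a s, w t := by
        refine lintegral_congr fun s => ?_
        rw [← lintegral_const_mul _ hw, ← Ioi_inter_Iio, inter_comm,
          ← Measure.restrict_restrict measurableSet_Iio,
          ← lintegral_indicator measurableSet_Iio]
        simp only [indicator_apply, mem_Iio]
    _ = ∫⁻ s in Ioi a, H s * ∫⁻ t in Ioo a s, w t :=
        (setLIntegral_eq_of_support_subset hsupp).symm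

theorem lintegral_Ioi_rpow_mul_rpow_le {p t : ℝ} (hp : 1 ≤ p) {c : ℝ≥0∞} {g v : ℝ → ℝ≥0∞}
    (hg : AEMeasurable g (volume.restrict (Ioi t))) (hv : AEMeasurable v (volume.restrict (Ioi t)))
    (hv0 : ∀ s, v s ≠ 0) (hvtop : ∀ s, v s ≠ ∞)
    (htail : ∫⁻ s in Ioi t, (v s)⁻¹ ≤ c * (v t)⁻¹) :
    (∫⁻ s in Ioi t, g s) ^ p * v t ^ p ≤
      c ^ (p - 1) * (v t * ∫⁻ s in Ioi t, g s ^ p * v s ^ (p - 1)) := by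
  have hp0 : 0 ≤ p - 1 := sub_nonneg.2 hp
  have hvt : v t ^ (p - 1) ≠ 0 := (ENNReal.rpow_pos (pos_iff_ne_zero.2 (hv0 t)) (hvtop t)).ne'
  have hvt' : v t ^ (p - 1) ≠ ∞ := ENNReal.rpow_ne_top_of_nonneg hp0 (hvtop t)
  set I := ∫⁻ s in Ioi t, g s ^ p * v s ^ (p - 1)
  calc (∫⁻ s in Ioi t, g s) ^ p * v t ^ p
      ≤ I * (∫⁻ s in Ioi t, (v s)⁻¹) ^ (p - 1) * v t ^ p := by
        gcongr
        exact ENNReal.lintegral_rpow_le_lintegral_mul_rpow_lintegral_inv hp hg hv hv0 hvtop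
    _ ≤ I * (c * (v t)⁻¹) ^ (p - 1) * v t ^ p := by gcongr
    _ = c ^ (p - 1) * ((v t ^ (p - 1))⁻¹ * v t ^ (p - 1)) * (v t * I) := by
        rw [ENNReal.mul_rpow_of_nonneg _ _ hp0, ENNReal.inv_rpow, ← ENNReal.rpow_sub_one_mul hp]
        ring
    _ = c ^ (p - 1) * (v t * I) := by rw [ENNReal.inv_mul_cancel hvt hvt', mul_one]

theorem lintegral_rpow_mul_rpow_le_of_le_lintegral_Ioi {p a : ℝ} (hp : 1 ≤ p) {c : ℝ≥0∞}
    {u g v : ℝ → ℝ≥0∞} (hg : Measurable g) (hv : Measurable v) (hv0 : ∀ t, v t ≠ 0)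
    (hvtop : ∀ t, v t ≠ ∞) (hu : ∀ t > a, u t ≤ ∫⁻ s in Ioi t, g s)
    (htail : ∀ t > a, ∫⁻ s in Ioi t, (v s)⁻¹ ≤ c * (v t)⁻¹)
    (hhead : ∀ s > a, ∫⁻ t in Ioo a s, v t ≤ c * v s) :
    ∫⁻ t in Ioi a, u t ^ p * v t ^ p ≤ c ^ p * ∫⁻ t in Ioi a, g t ^ p * v t ^ p := by
  set H : ℝ → ℝ≥0∞ := fun s => g s ^ p * v s ^ (p - 1)
  have hH : Measurable H := (hg.pow_const p).mul (hv.pow_const (p - 1))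
  have hvH : Measurable fun t => v t * ∫⁻ s in Ioi t, H s :=
    hv.mul (Antitone.measurable fun t t' htt' => lintegral_mono_set (Ioi_subset_Ioi htt'))
  have hgv : Measurable fun t => g t ^ p * v t ^ p := (hg.pow_const p).mul (hv.pow_const p)
  calc ∫⁻ t in Ioi a, u t ^ p * v t ^ p
      ≤ ∫⁻ t in Ioi a, c ^ (p - 1) * (v t * ∫⁻ s in Ioi t, H s) := by
        refine setLIntegral_mono' measurableSet_Ioi fun t ht => ?_
        calc u t ^ p * v t ^ p ≤ (∫⁻ s in Ioi t, g s) ^ p * v t ^ p := by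
              gcongr
              exact hu t ht
          _ ≤ _ := lintegral_Ioi_rpow_mul_rpow_le hp hg.aemeasurable hv.aemeasurable hv0 hvtop
              (htail t ht)
    _ = c ^ (p - 1) * ∫⁻ s in Ioi a, H s * ∫⁻ t in Ioo a s, v t := by
        rw [lintegral_const_mul _ hvH, lintegral_Ioi_mul_lintegral_Ioi hH hv]
    _ ≤ c ^ (p - 1) * ∫⁻ s in Ioi a, H s * (c * v s) := by
        gcongr 1
        exact setLIntegral_mono' measurableSet_Ioi fun s hs => by gcongr; exact hhead s hs
    _ = c ^ p * ∫⁻ t in Ioi a, g t ^ p * v t ^ p := by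
        rw [← ENNReal.rpow_sub_one_mul hp, mul_assoc, ← lintegral_const_mul _ hgv]
        congr 1
        refine lintegral_congr fun s => ?_
        rw [← ENNReal.rpow_sub_one_mul hp (x := v s)]
        ring

theorem lintegral_Ioi_inv_ofReal_exp_mul {β : ℝ} (hβ : 0 < β) (t : ℝ) :
    ∫⁻ s in Ioi t, (ENNReal.ofReal (Real.exp (β * s)))⁻¹ =
      ENNReal.ofReal β⁻¹ * (ENNReal.ofReal (Real.exp (β * t)))⁻¹ := by
  have hneg : -β < 0 := neg_lt_zero.2 hβ
  simp only [← ENNReal.ofReal_inv_of_pos (Real.exp_pos _), ← Real.exp_neg, ← neg_mul]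
  rw [← ofReal_integral_eq_lintegral_ofReal (integrableOn_exp_mul_Ioi hneg t)
    (ae_of_all _ fun _ => (Real.exp_pos _).le), integral_exp_mul_Ioi hneg,
    ← ENNReal.ofReal_mul (inv_nonneg.2 hβ.le)]
  congr 1
  field_simp

theorem lintegral_Iic_ofReal_exp_mul {β : ℝ} (hβ : 0 < β) (s : ℝ) :
    ∫⁻ t in Iic s, ENNReal.ofReal (Real.exp (β * t)) =
      ENNReal.ofReal β⁻¹ * ENNReal.ofReal (Real.exp (β * s)) := by
  rw [← ofReal_integral_eq_lintegral_ofReal (integrableOn_exp_mul_Iic hβ s)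
    (ae_of_all _ fun _ => (Real.exp_pos _).le), integral_exp_mul_Iic hβ,
    ← ENNReal.ofReal_mul (inv_nonneg.2 hβ.le), inv_mul_eq_div]

theorem lintegral_rpow_mul_exp_le_of_le_lintegral_Ioi {p κ a : ℝ} (hp : 1 ≤ p) (hκ : 0 < κ)
    {u g : ℝ → ℝ≥0∞} (hg : Measurable g) (hu : ∀ t > a, u t ≤ ∫⁻ s in Ioi t, g s) :
    ∫⁻ t in Ioi a, u t ^ p * ENNReal.ofReal (Real.exp (κ * t)) ≤
      ENNReal.ofReal ((p / κ) ^ p) *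
        ∫⁻ t in Ioi a, g t ^ p * ENNReal.ofReal (Real.exp (κ * t)) := by
  have hp0 : 0 < p := zero_lt_one.trans_le hp
  have hβ : 0 < κ / p := div_pos hκ hp0
  have hexp : ∀ t, ENNReal.ofReal (Real.exp (κ * t)) = ENNReal.ofReal (Real.exp (κ / p * t)) ^ p :=
    fun t => by
      rw [ENNReal.ofReal_rpow_of_pos (Real.exp_pos _), ← Real.exp_mul]
      congr 2
      field_simp
  have hconst : ENNReal.ofReal ((p / κ) ^ p) = ENNReal.ofReal (κ / p)⁻¹ ^ p := by
    rw [inv_div, ENNReal.ofReal_rpow_of_nonneg (div_pos hp0 hκ).le hp0.le]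
  simp only [hexp, hconst]
  refine lintegral_rpow_mul_rpow_le_of_le_lintegral_Ioi hp hg (by fun_prop)
    (fun t => by simp [Real.exp_pos]) (fun t => ENNReal.ofReal_ne_top) hu
    (fun t _ => (lintegral_Ioi_inv_ofReal_exp_mul hβ t).le) fun s _ => ?_
  rw [← lintegral_Iic_ofReal_exp_mul hβ s]
  exact lintegral_mono_set (Ioo_subset_Ioc_self.trans Ioc_subset_Iic_self)

theorem enorm_le_lintegral_Ioi_enorm_of_tendsto_zero {f f' : ℝ → ℝ} {t : ℝ}
    (hftc : ∀ b, t ≤ b → f b - f t = ∫ s in t..b, f' s) (hf : Tendsto f atTop (𝓝 0)) :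
    ‖f t‖ₑ ≤ ∫⁻ s in Ioi t, ‖f' s‖ₑ := by
  have hbound : ∀ b, t ≤ b → ‖f t‖ₑ ≤ ‖f b‖ₑ + ∫⁻ s in Ioi t, ‖f' s‖ₑ := fun b htb =>
    calc ‖f t‖ₑ = ‖f b - ∫ s in Ioc t b, f' s‖ₑ := by
          rw [← intervalIntegral.integral_of_le htb, ← hftc b htb, sub_sub_cancel]
      _ ≤ ‖f b‖ₑ + ∫⁻ s in Ioc t b, ‖f' s‖ₑ :=
          enorm_sub_le.trans (by gcongr; exact enorm_integral_le_lintegral_enorm _)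
      _ ≤ ‖f b‖ₑ + ∫⁻ s in Ioi t, ‖f' s‖ₑ := by gcongr; exact Ioc_subset_Ioi_self
  have hlim : Tendsto (fun b => ‖f b‖ₑ + ∫⁻ s in Ioi t, ‖f' s‖ₑ) atTop
      (𝓝 (∫⁻ s in Ioi t, ‖f' s‖ₑ)) := by
    simpa using hf.enorm.add_const (∫⁻ s in Ioi t, ‖f' s‖ₑ)
  exact ge_of_tendsto hlim (eventually_ge_atTop t |>.mono hbound)

theorem locallyIntegrableOn_Ioi_of_integrableOn_Icc {f : ℝ → ℝ} {a : ℝ}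
    (hf : ∀ b c, a < b → b ≤ c → IntegrableOn f (Icc b c)) : LocallyIntegrableOn f (Ioi a) := by
  intro x hx
  obtain ⟨b, hab, hbx⟩ := exists_between (mem_Ioi.1 hx)
  exact ⟨Icc b (x + 1), nhdsWithin_le_nhds (Icc_mem_nhds hbx (lt_add_one x)),
    hf b (x + 1) hab (by linarith)⟩

theorem ENNReal.ofReal_abs_rpow_mul (x : ℝ) {p : ℝ} (hp : 0 ≤ p) (y : ℝ) :
    ENNReal.ofReal (|x| ^ p * y) = ‖x‖ₑ ^ p * ENNReal.ofReal y := by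
  rw [ENNReal.ofReal_mul (by positivity), ← ENNReal.ofReal_rpow_of_nonneg (abs_nonneg x) hp,
    Real.enorm_eq_ofReal_abs]

theorem statement19_general (p κ : ℝ) (hp : 1 ≤ p) (hκ : 0 < κ)
    (f f' : ℝ → ℝ)
    (hloc : ∀ a b : ℝ, 0 < a → a ≤ b → IntegrableOn f' (Set.Icc a b))
    (hftc : ∀ a b : ℝ, 0 < a → a ≤ b → f b - f a = ∫ t in a..b, f' t)
    (hinfty : Tendsto f atTop (𝓝 0)) :
    (∫⁻ t in Set.Ioi (0 : ℝ), ENNReal.ofReal (|f t| ^ p * Real.exp (κ * t))) ≤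
      ENNReal.ofReal ((p / κ) ^ p) *
        ∫⁻ t in Set.Ioi (0 : ℝ), ENNReal.ofReal (|f' t| ^ p * Real.exp (κ * t)) := by
  have hp0 : 0 ≤ p := zero_le_one.trans hp
  have hf' : AEMeasurable f' (volume.restrict (Ioi 0)) :=
    (locallyIntegrableOn_Ioi_of_integrableOn_Icc hloc).aestronglyMeasurable.aemeasurable
  have htail : ∀ t > 0, ‖f t‖ₑ ≤ ∫⁻ s in Ioi t, ‖hf'.mk f' s‖ₑ := fun t ht => by
    refine (enorm_le_lintegral_Ioi_enorm_of_tendsto_zero (hftc t · ht) hinfty).trans_eq ?_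
    refine lintegral_congr_ae (ae_restrict_of_ae_restrict_of_subset (Ioi_subset_Ioi ht.le) ?_)
    filter_upwards [hf'.ae_eq_mk] with s hs using by rw [hs]
  simp only [ENNReal.ofReal_abs_rpow_mul _ hp0]
  calc _ ≤ ENNReal.ofReal ((p / κ) ^ p) *
        ∫⁻ t in Ioi 0, ‖hf'.mk f' t‖ₑ ^ p * ENNReal.ofReal (Real.exp (κ * t)) :=
        lintegral_rpow_mul_exp_le_of_le_lintegral_Ioi hp hκ hf'.measurable_mk.enorm htail
    _ = _ := by
        congr 1
        refine lintegral_congr_ae ?_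
        filter_upwards [hf'.ae_eq_mk] with s hs using by rw [hs]

/-- a one-dimensional weighted Sobolev inequality. If `f : (0,∞) → ℝ` is locally
absolutely continuous with a.e. derivative `f'` (i.e. `f'` is locally integrable on `(0,∞)`
and `f(b) - f(a) = ∫_a^b f'` for `0 < a ≤ b`), and `f(t) → 0` as `t → 0⁺` and as `t → ∞`,
then `∫₀^∞ |f(t)|ᵖ e^{κt} dt ≤ (p/κ)ᵖ ∫₀^∞ |f'(t)|ᵖ e^{κt} dt`. -/
theorem statement19 (p κ : ℝ) (hp : 1 ≤ p) (hκ : 0 < κ)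
    (f f' : ℝ → ℝ)
    (hloc : ∀ a b : ℝ, 0 < a → a ≤ b → IntegrableOn f' (Set.Icc a b))
    (hftc : ∀ a b : ℝ, 0 < a → a ≤ b → f b - f a = ∫ t in a..b, f' t)
    (h0 : Tendsto f (nhdsWithin 0 (Set.Ioi 0)) (𝓝 0))
    (hinfty : Tendsto f atTop (𝓝 0)) :
    (∫⁻ t in Set.Ioi (0 : ℝ), ENNReal.ofReal (|f t| ^ p * Real.exp (κ * t))) ≤
      ENNReal.ofReal ((p / κ) ^ p) *
        ∫⁻ t in Set.Ioi (0 : ℝ), ENNReal.ofReal (|f' t| ^ p * Real.exp (κ * t)) :=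
  statement19_general p κ hp hκ f f' hloc hftc hinfty
end
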